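/- Let k be a field, α ∈ Q⁺ with ht(α) = n, and let λ, μ ∈ KP(α) be Kostant partitions with λ ≱ μ in the bilexicographic order. If w ∈ S_n satisfies 1_λ τ_w 1_μ ≠ 0 in H_{α,k}, then there exists 1 ≤ r < n such that r ∼_λ r+1 but w^{-1}(r) ≁_μ w^{-1}(r+1). -/

import Mathlib

/-!
If `1_λ τ_w 1_μ ≠ 0`, then since `τ_w 1_j = 1_{j ∘ w⁻¹} τ_w` some word `j ∈ I^{μ}` has
`j ∘ w⁻¹ ∈ I^{λ}`. If the conclusion failed, `w⁻¹` would map each block of `λ` into a single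
block of `μ`, and counting letters block by block shows that every part of `μ` is the sum of a
group of parts of `λ`: `μ` is obtained from `λ` by merging parts.

Such a merge is bilexicographically `≤ λ`. The key fact is that a positive root which is a sum
of positive roots lies, for a convex order, between two of the summands; it rests on the
root-string property that `β - γ` is a root whenever `(β, γ) > 0`, proved by reflecting in the
Weyl group orbits of simple roots and using positive definiteness of the symmetrized form.
-/

open scoped BigOperators

namespace KLR

/-- A Cartan datum of finite type: a finite index set `I`, a Cartan matrix `c` of finite type
(encoded by positive definiteness of the symmetrized matrix), symmetrizers `d`, and a choice
of signs `eps` with `eps i j * eps j i = -1` whenever `c i j < 0`. -/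
structure CartanDatum (I : Type) [Fintype I] [DecidableEq I] where
  c : I → I → ℤ
  d : I → ℤ
  eps : I → I → ℤ
  c_diag : ∀ i, c i i = 2
  c_offdiag : ∀ i j, i ≠ j → c i j ≤ 0
  c_zero_iff : ∀ i j, c i j = 0 → c j i = 0
  d_pos : ∀ i, 0 < d i
  symm : ∀ i j, d i * c i j = d j * c j i
  finiteType : ∀ v : I → ℚ, v ≠ 0 → 0 < ∑ i, ∑ j, v i * ((d i * c i j : ℤ) : ℚ) * v j
  eps_sign : ∀ i j, c i j < 0 → eps i j = 1 ∨ eps i j = -1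
  eps_skew : ∀ i j, c i j < 0 → eps i j * eps j i = -1

variable {I : Type} [Fintype I] [DecidableEq I]

/-- The height of `α ∈ Q⁺`, where `α : I → ℕ` records the coefficients on the simple roots. -/
def ht (α : I → ℕ) : ℕ := ∑ i, α i

/-- Membership in `I^α`: the word `f` has exactly `α i` letters equal to `i`, for each `i`. -/
def InIalpha (α : I → ℕ) {n : ℕ} (f : Fin n → I) : Prop :=
  ∀ i : I, (Finset.univ.filter fun r => f r = i).card = α i

instance (α : I → ℕ) {n : ℕ} (f : Fin n → I) : Decidable (InIalpha α f) := by
  unfold InIalpha; infer_instance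

/-- Generators of the KLR algebra: idempotents `e f`, polynomial generators `x r`,
and "intertwiners" `t r` (the generator `t r` is set to `0` unless `r + 1 < n`). -/
inductive Gen (I : Type) (n : ℕ) : Type
  | e : (Fin n → I) → Gen I n
  | x : Fin n → Gen I n
  | t : Fin n → Gen I n

variable (k : Type) [CommRing k]

/-- `e f` as an element of the free algebra. -/
def Ee {n : ℕ} (f : Fin n → I) : FreeAlgebra k (Gen I n) := FreeAlgebra.ι k (Gen.e f)

/-- `x r` as an element of the free algebra. -/
def Xx {n : ℕ} (r : Fin n) : FreeAlgebra k (Gen I n) := FreeAlgebra.ι k (Gen.x r)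

/-- `t r` as an element of the free algebra. -/
def Tt {n : ℕ} (r : Fin n) : FreeAlgebra k (Gen I n) := FreeAlgebra.ι k (Gen.t r)

/-- `r + 1` as an element of `Fin n`. -/
def nxt {n : ℕ} (r : Fin n) (h : r.val + 1 < n) : Fin n := ⟨r.val + 1, h⟩

/-- The defining relations of the KLR algebra `H_α` over `k`.
(`Rel a b` means that `a = b` is imposed in the quotient.) -/
inductive Rel (D : CartanDatum I) (α : I → ℕ) (n : ℕ) :
    FreeAlgebra k (Gen I n) → FreeAlgebra k (Gen I n) → Prop
  | xx (r s : Fin n) : Rel D α n (Xx k r * Xx k s) (Xx k s * Xx k r)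
  | ee (f g : Fin n → I) :
      Rel D α n (Ee k f * Ee k g) (if f = g then Ee k f else 0)
  | esum : Rel D α n (∑ f : Fin n → I, Ee k f) 1
  | ekill (f : Fin n → I) (h : ¬ InIalpha α f) : Rel D α n (Ee k f) 0
  | xe (r : Fin n) (f : Fin n → I) : Rel D α n (Xx k r * Ee k f) (Ee k f * Xx k r)
  | te (r : Fin n) (h : r.val + 1 < n) (f : Fin n → I) :
      Rel D α n (Tt k r * Ee k f) (Ee k (f ∘ Equiv.swap r (nxt r h)) * Tt k r)
  | tkill (r : Fin n) (h : ¬ r.val + 1 < n) : Rel D α n (Tt k r) 0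
  | xte (s r : Fin n) (h : r.val + 1 < n) (f : Fin n → I) :
      Rel D α n (Xx k s * Tt k r * Ee k f - Tt k r * Xx k (Equiv.swap r (nxt r h) s) * Ee k f)
        (if f r = f (nxt r h) then
          ((if s = nxt r h then (1 : FreeAlgebra k (Gen I n)) else 0) -
            (if s = r then 1 else 0)) * Ee k f
         else 0)
  | tte (r : Fin n) (h : r.val + 1 < n) (f : Fin n → I) :
      Rel D α n (Tt k r * Tt k r * Ee k f)
        (if f r = f (nxt r h) then 0
         else if D.c (f r) (f (nxt r h)) < 0 then
           D.eps (f r) (f (nxt r h)) •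
             ((Xx k r ^ (-(D.c (f r) (f (nxt r h)))).toNat -
               Xx k (nxt r h) ^ (-(D.c (f (nxt r h)) (f r))).toNat) * Ee k f)
         else Ee k f)
  | ttfar (r s : Fin n) (h : r.val + 1 < s.val ∨ s.val + 1 < r.val) :
      Rel D α n (Tt k r * Tt k s) (Tt k s * Tt k r)
  | braid (r : Fin n) (h : r.val + 2 < n) (f : Fin n → I) :
      Rel D α n
        (Tt k (nxt r (by omega)) * Tt k r * Tt k (nxt r (by omega)) * Ee k f -
          Tt k r * Tt k (nxt r (by omega)) * Tt k r * Ee k f)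
        (if D.c (f r) (f (nxt r (by omega))) < 0 ∧ f r = f ⟨r.val + 2, h⟩ then
          D.eps (f r) (f (nxt r (by omega))) •
            ((∑ a ∈ Finset.range ((-1 - D.c (f r) (f (nxt r (by omega)))).toNat + 1),
              Xx k r ^ a *
                Xx k (⟨r.val + 2, h⟩ : Fin n) ^
                  ((-1 - D.c (f r) (f (nxt r (by omega)))).toNat - a)) * Ee k f)
         else 0)

/-- The KLR algebra `H_α` over `k`, defined by generators and relations. -/
abbrev H (D : CartanDatum I) (α : I → ℕ) : Type :=
  RingQuot (Rel k D α (ht α))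

variable (D : CartanDatum I) (α : I → ℕ)

/-- The idempotent `1_f ∈ H_α` for `f ∈ I^α`. -/
noncomputable def E (f : Fin (ht α) → I) : H k D α :=
  RingQuot.mkAlgHom k (Rel k D α (ht α)) (Ee k f)

/-- The generator `x_r ∈ H_α`. -/
noncomputable def X (r : Fin (ht α)) : H k D α :=
  RingQuot.mkAlgHom k (Rel k D α (ht α)) (Xx k r)

/-- The generator `τ_r ∈ H_α`. -/
noncomputable def T (r : Fin (ht α)) : H k D α :=
  RingQuot.mkAlgHom k (Rel k D α (ht α)) (Tt k r)

/-- The monomial `x_1^{a 1} ⋯ x_n^{a n} ∈ H_α`. -/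
noncomputable def XA (a : Fin (ht α) → ℕ) : H k D α :=
  (List.ofFn fun r => X k D α r ^ a r).prod

/-- The product `τ_{r_1} ⋯ τ_{r_l} ∈ H_α` associated to a word `L = [r_1, …, r_l]`. -/
noncomputable def tauWord (L : List (Fin (ht α))) : H k D α :=
  (L.map (T k D α)).prod

/-- The permutation `s_{r_1} ⋯ s_{r_l}` associated to a word. -/
def wordPerm {n : ℕ} (L : List (Fin n)) : Equiv.Perm (Fin n) :=
  (L.map fun r => if h : r.val + 1 < n then Equiv.swap r (nxt r h) else 1).prod

/-- A word is valid if all its letters index simple transpositions. -/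
def ValidWord {n : ℕ} (L : List (Fin n)) : Prop := ∀ r ∈ L, r.val + 1 < n

/-- `L` is a reduced expression for the permutation `w`. -/
def IsReducedWordFor {n : ℕ} (L : List (Fin n)) (w : Equiv.Perm (Fin n)) : Prop :=
  ValidWord L ∧ wordPerm L = w ∧
    ∀ L' : List (Fin n), ValidWord L' → wordPerm L' = w → L.length ≤ L'.length

end KLR
namespace KLR

variable {I : Type} [Fintype I] [DecidableEq I]

/-- The simple root `α_i`, as an integer vector in the root lattice. -/
def simple (i : I) : I → ℤ := fun j => if j = i then 1 else 0

/-- The simple reflection `s_i` acting on the root lattice: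
`s_i(v) = v - (Σ_t c_{i,t} v_t) α_i`. -/
def srefl (D : CartanDatum I) (i : I) (v : I → ℤ) : I → ℤ :=
  fun j => v j - (if j = i then ∑ t, D.c i t * v t else 0)

/-- `v` is a root of the (finite type) root system with Cartan matrix `C`:
it lies in the Weyl group orbit of a simple root. -/
def IsRoot (D : CartanDatum I) (v : I → ℤ) : Prop :=
  ∃ (L : List I) (i : I), v = L.foldr (srefl D) (simple i)

/-- `v` is a positive root: a root all of whose coordinates are nonnegative. -/
def IsPosRoot (D : CartanDatum I) (v : I → ℤ) : Prop :=
  IsRoot D v ∧ ∀ j, 0 ≤ v j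

/-- `le` is a convex order on the set `Φ⁺` of positive roots: a total order such that
whenever `γ`, `β` and `γ + β` are all positive roots, `γ ⪯ β` implies
`γ ⪯ γ + β ⪯ β`. -/
structure IsConvexOrder (D : CartanDatum I) (le : (I → ℤ) → (I → ℤ) → Prop) : Prop where
  refl : ∀ v, IsPosRoot D v → le v v
  trans : ∀ u v w, IsPosRoot D u → IsPosRoot D v → IsPosRoot D w →
      le u v → le v w → le u w
  antisymm : ∀ u v, IsPosRoot D u → IsPosRoot D v → le u v → le v u → u = v
  total : ∀ u v, IsPosRoot D u → IsPosRoot D v → le u v ∨ le v u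
  convex : ∀ γ β, IsPosRoot D γ → IsPosRoot D β → IsPosRoot D (γ + β) → le γ β →
      le γ (γ + β) ∧ le (γ + β) β

/-- `L` is a Kostant partition of `α`: a weakly decreasing (for the convex order `le`)
list of positive roots summing to `α`. -/
def IsKP (D : CartanDatum I) (le : (I → ℤ) → (I → ℤ) → Prop) (α : I → ℕ)
    (L : List (I → ℤ)) : Prop :=
  (∀ v ∈ L, IsPosRoot D v) ∧ List.Pairwise (fun a b => le b a) L ∧
    L.sum = fun i => (α i : ℤ)

/-- `L` is lexicographically smaller than `M` for the strict order `lt`: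
they agree up to position `t`, where the entry of `L` is `lt`-smaller. -/
def LexLt {V : Type} (lt : V → V → Prop) (L M : List V) : Prop :=
  ∃ (t : ℕ) (h1 : t < L.length) (h2 : t < M.length),
    L.take t = M.take t ∧ lt (L.get ⟨t, h1⟩) (M.get ⟨t, h2⟩)

/-- The strict bilexicographic order on Kostant partitions: `L < M` iff `L` is
lexicographically smaller than `M` and the reversed list `L.reverse` is lexicographically
bigger than `M.reverse`. -/
def BilexLt {V : Type} (le : V → V → Prop) (L M : List V) : Prop :=
  LexLt (fun a b => le a b ∧ a ≠ b) L M ∧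
    LexLt (fun a b => le b a ∧ a ≠ b) L.reverse M.reverse

end KLR

namespace KLR

open scoped Classical

variable {I : Type} [Fintype I] [DecidableEq I]

/-- The height of a positive root, recorded as an integer vector. -/
def htroot (v : I → ℤ) : ℕ := (∑ i, v i).toNat

/-- `offset L t` is the position at which the `t`-th block of a Kostant partition `L` starts,
namely `ht(λ_1) + ⋯ + ht(λ_t)`. -/
def offset (L : List (I → ℤ)) (t : ℕ) : ℕ := ((L.take t).map htroot).sum

/-- Positions `r` and `s` (0-based) are `λ`-equivalent: they lie in the same block of the
parabolic subgroup `S_λ ≤ S_n`. -/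
def sameBlock (L : List (I → ℤ)) (r s : ℕ) : Prop :=
  ∃ t, offset L t ≤ r ∧ r < offset L (t + 1) ∧ offset L t ≤ s ∧ s < offset L (t + 1)

/-- `f ∈ I^{λ_1,…,λ_l}`: the word `f` is a concatenation of words `f^t ∈ I^{λ_t}`. -/
def blockMem (L : List (I → ℤ)) {n : ℕ} (f : Fin n → I) : Prop :=
  ∀ (t : ℕ) (h : t < L.length), ∀ i : I,
    ((Finset.univ.filter fun r : Fin n =>
        offset L t ≤ r.val ∧ r.val < offset L (t + 1) ∧ f r = i).card : ℤ) = L.get ⟨t, h⟩ i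

variable (k : Type) [CommRing k]

/-- The idempotent `1_λ = Σ_{f ∈ I^{λ_1,…,λ_l}} 1_f ∈ H_α` attached to a Kostant
partition `λ`. -/
noncomputable def oneKP (D : CartanDatum I) (α : I → ℕ) (L : List (I → ℤ)) : H k D α :=
  ∑ f : Fin (ht α) → I, if blockMem L f then E k D α f else 0

end KLR

namespace KLR

section

variable {I : Type} [Fintype I] [DecidableEq I]

namespace CartanDatum

variable (D : CartanDatum I)

def form : LinearMap.BilinForm ℤ (I → ℤ) :=
  Matrix.toLinearMap₂' ℤ (Matrix.of fun i j => D.d i * D.c i j)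

lemma form_apply (u v : I → ℤ) : D.form u v = ∑ i, ∑ j, u i * (D.d i * D.c i j) * v j := by
  simp only [form, Matrix.toLinearMap₂'_apply, Matrix.of_apply, smul_eq_mul]
  exact Finset.sum_congr rfl fun i _ => Finset.sum_congr rfl fun j _ => by ring

lemma form_comm (u v : I → ℤ) : D.form u v = D.form v u := by
  rw [form_apply, form_apply, Finset.sum_comm]
  refine Finset.sum_congr rfl fun j _ => Finset.sum_congr rfl fun i _ => ?_
  linear_combination (u i * v j) * D.symm i j

lemma form_self_pos {v : I → ℤ} (hv : v ≠ 0) : 0 < D.form v v := by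
  have hvℚ : (fun i => (v i : ℚ)) ≠ 0 := fun h =>
    hv (funext fun i => by simpa using congrFun h i)
  have := D.finiteType _ hvℚ
  rw [form_apply]
  exact_mod_cast this

lemma form_simple (v : I → ℤ) (i : I) :
    D.form v (simple i) = D.d i * ∑ t, D.c i t * v t := by
  simp only [form_apply, simple, mul_ite, mul_one, mul_zero, Finset.sum_ite_eq',
    Finset.mem_univ, if_true, Finset.mul_sum]
  exact Finset.sum_congr rfl fun t _ => by linear_combination v t * D.symm t i

lemma sum_mul_simple (i : I) : ∑ t, D.c i t * simple i t = 2 := by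
  simp [simple, D.c_diag]

lemma form_simple_self (i : I) : D.form (simple i) (simple i) = 2 * D.d i := by
  rw [form_simple, sum_mul_simple, mul_comm]

end CartanDatum

variable (D : CartanDatum I)

lemma srefl_eq (i : I) (v : I → ℤ) :
    srefl D i v = v - (∑ t, D.c i t * v t) • simple i := by
  funext j
  by_cases h : j = i <;> simp [srefl, simple, h]

lemma sum_mul_srefl (i : I) (v : I → ℤ) :
    ∑ t, D.c i t * srefl D i v t = -∑ t, D.c i t * v t := by
  simp only [srefl_eq, Pi.sub_apply, Pi.smul_apply, smul_eq_mul, mul_sub, Finset.sum_sub_distrib,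
    mul_left_comm _ (∑ t, D.c i t * v t), ← Finset.mul_sum, D.sum_mul_simple]
  ring

lemma srefl_srefl (i : I) (v : I → ℤ) : srefl D i (srefl D i v) = v := by
  rw [srefl_eq D i (srefl D i v), sum_mul_srefl, srefl_eq]
  simp

lemma form_srefl (i : I) (u v : I → ℤ) :
    D.form (srefl D i u) (srefl D i v) = D.form u v := by
  simp only [srefl_eq, map_sub, map_smul, LinearMap.sub_apply, LinearMap.smul_apply,
    D.form_simple, smul_eq_mul, D.sum_mul_simple]
  rw [D.form_comm (simple i), D.form_simple]
  ring

def sreflLinear (i : I) : Module.End ℤ (I → ℤ) where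
  toFun := srefl D i
  map_add' u v := by
    funext j
    by_cases h : j = i <;> simp [srefl, h, mul_add, Finset.sum_add_distrib, sub_add_sub_comm]
  map_smul' z v := by
    funext j
    by_cases h : j = i <;> simp [srefl, h, mul_sub, Finset.mul_sum, mul_left_comm]

lemma sreflLinear_apply (i : I) (v : I → ℤ) : sreflLinear D i v = srefl D i v := rfl

lemma sreflLinear_mul_self (i : I) : sreflLinear D i * sreflLinear D i = 1 :=
  LinearMap.ext (srefl_srefl D i)

def weylWord (L : List I) : Module.End ℤ (I → ℤ) := (L.map (sreflLinear D)).prod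

lemma weylWord_cons (i : I) (L : List I) :
    weylWord D (i :: L) = sreflLinear D i * weylWord D L := by
  simp [weylWord]

lemma weylWord_append (L M : List I) : weylWord D (L ++ M) = weylWord D L * weylWord D M := by
  simp [weylWord]

lemma weylWord_singleton (i : I) : weylWord D [i] = sreflLinear D i := by
  simp [weylWord]

lemma foldr_srefl (L : List I) (v : I → ℤ) : L.foldr (srefl D) v = weylWord D L v := by
  induction L with
  | nil => simp [weylWord]
  | cons i L ih => rw [List.foldr_cons, ih, weylWord_cons, Module.End.mul_apply, sreflLinear_apply]

lemma weylWord_mul_weylWord_reverse (L : List I) : weylWord D L * weylWord D L.reverse = 1 := by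
  induction L with
  | nil => simp [weylWord]
  | cons i L ih =>
    rw [List.reverse_cons, weylWord_append, weylWord_cons, weylWord_singleton, mul_assoc,
      ← mul_assoc (weylWord D L), ih, one_mul, sreflLinear_mul_self]

lemma form_weylWord (L : List I) (u v : I → ℤ) :
    D.form (weylWord D L u) (weylWord D L v) = D.form u v := by
  induction L with
  | nil => simp [weylWord]
  | cons i L ih =>
    rw [weylWord_cons, Module.End.mul_apply, Module.End.mul_apply, sreflLinear_apply,
      sreflLinear_apply, form_srefl, ih]

lemma isRoot_iff (v : I → ℤ) :
    IsRoot D v ↔ ∃ (L : List I) (i : I), v = weylWord D L (simple i) := by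
  simp only [IsRoot, foldr_srefl]

namespace IsRoot

variable {D}

lemma weylWord_apply {v : I → ℤ} (hv : IsRoot D v) (L : List I) :
    IsRoot D (weylWord D L v) := by
  obtain ⟨M, i, rfl⟩ := (isRoot_iff D v).1 hv
  exact (isRoot_iff D _).2 ⟨L ++ M, i, by rw [weylWord_append, Module.End.mul_apply]⟩

lemma form_self_pos {v : I → ℤ} (hv : IsRoot D v) : 0 < D.form v v := by
  obtain ⟨L, i, rfl⟩ := (isRoot_iff D v).1 hv
  rw [form_weylWord, D.form_simple_self]
  linarith [D.d_pos i]

lemma ne_zero {v : I → ℤ} (hv : IsRoot D v) : v ≠ 0 := by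
  rintro rfl
  simpa using hv.form_self_pos

lemma neg {v : I → ℤ} (hv : IsRoot D v) : IsRoot D (-v) := by
  obtain ⟨L, i, rfl⟩ := (isRoot_iff D v).1 hv
  have : srefl D i (simple i) = -simple i := by
    rw [srefl_eq, D.sum_mul_simple]
    abel
  refine (isRoot_iff D _).2 ⟨L ++ [i], i, ?_⟩
  rw [weylWord_append, Module.End.mul_apply, weylWord_singleton, sreflLinear_apply, this, map_neg]

/-- `β - pγ` is the reflection of `β` in `γ = w αᵢ`, with `p = ⟨w⁻¹β, αᵢ^∨⟩`. -/
lemma exists_sub_smul {β γ : I → ℤ} (hβ : IsRoot D β) (hγ : IsRoot D γ) :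
    ∃ p : ℤ, 2 * D.form β γ = p * D.form γ γ ∧ IsRoot D (β - p • γ) := by
  obtain ⟨L, i, rfl⟩ := (isRoot_iff D γ).1 hγ
  have hβ' : weylWord D L (weylWord D L.reverse β) = β := by
    rw [← Module.End.mul_apply, weylWord_mul_weylWord_reverse, Module.End.one_apply]
  set β' := weylWord D L.reverse β
  refine ⟨∑ t, D.c i t * β' t, ?_, ?_⟩
  · rw [← hβ', form_weylWord, form_weylWord, D.form_simple, D.form_simple_self]
    ring
  · have := ((hβ.weylWord_apply L.reverse).weylWord_apply [i]).weylWord_apply L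
    rwa [weylWord_singleton, sreflLinear_apply, srefl_eq, map_sub, map_smul, hβ'] at this

lemma sub {β γ : I → ℤ} (hβ : IsRoot D β) (hγ : IsRoot D γ) (hne : β ≠ γ)
    (hpos : 0 < D.form β γ) : IsRoot D (β - γ) := by
  obtain ⟨p, hp, hβp⟩ := hβ.exists_sub_smul hγ
  obtain ⟨q, hq, hγq⟩ := hγ.exists_sub_smul hβ
  rw [D.form_comm] at hq
  have hγγ := hγ.form_self_pos
  have hββ := hβ.form_self_pos
  by_cases hp1 : p = 1
  · simpa [hp1] using hβp
  by_cases hq1 : q = 1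
  · simpa [hq1] using hγq.neg
  -- otherwise `p, q ≥ 2`, so `(β, γ) ≥ (γ, γ), (β, β)` and `(β - γ, β - γ) ≤ 0`
  have hp2 : 2 ≤ p := by
    have : 0 < p := pos_of_mul_pos_left (by linarith) hγγ.le
    omega
  have hq2 : 2 ≤ q := by
    have : 0 < q := pos_of_mul_pos_left (by linarith) hββ.le
    omega
  have hsub := (D.form_self_pos (sub_ne_zero.2 hne))
  simp only [map_sub, LinearMap.sub_apply, D.form_comm γ β] at hsub
  nlinarith

end IsRoot

lemma IsPosRoot.nonneg {D : CartanDatum I} {v : I → ℤ} (hv : IsPosRoot D v) : 0 ≤ v := hv.2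

lemma sum_ne_zero_of_isPosRoot {G : Multiset (I → ℤ)} (hG : ∀ v ∈ G, IsPosRoot D v)
    (hne : G ≠ 0) : G.sum ≠ 0 := by
  obtain ⟨a, ha⟩ := Multiset.exists_mem_of_ne_zero hne
  intro h0
  have : a ≤ G.sum := Multiset.single_le_sum (fun v hv => (hG v hv).nonneg) a ha
  exact (hG a ha).1.ne_zero (le_antisymm (h0 ▸ this) (hG a ha).nonneg)

lemma eq_singleton_of_sum_eq {G : Multiset (I → ℤ)} (hG : ∀ v ∈ G, IsPosRoot D v)
    {γ : I → ℤ} (hγ : γ ∈ G) (hsum : G.sum = γ) : G = {γ} := by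
  have hrest : (G.erase γ).sum = 0 := by
    have := Multiset.sum_erase hγ
    rw [hsum] at this
    exact add_eq_left.mp this
  have : G.erase γ = 0 := by
    by_contra hne
    exact sum_ne_zero_of_isPosRoot D (fun v hv => hG v (Multiset.mem_of_mem_erase hv)) hne hrest
  rw [← Multiset.cons_erase hγ, this]
  rfl

lemma exists_mem_form_sum_pos {G : Multiset (I → ℤ)} (hG : IsRoot D G.sum) :
    ∃ γ ∈ G, 0 < D.form G.sum γ := by
  by_contra! h
  have : D.form G.sum G.sum ≤ 0 := by
    rw [map_multiset_sum]
    exact (Multiset.sum_le_card_nsmul _ 0 (by simpa using h)).trans (by simp)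
  exact absurd hG.form_self_pos (not_lt.2 this)

lemma lexLt_cons {V : Type} {lt : V → V → Prop} (a : V) {A B : List V} (h : LexLt lt A B) :
    LexLt lt (a :: A) (a :: B) := by
  obtain ⟨t, h1, h2, htake, hlt⟩ := h
  exact ⟨t + 1, by simpa using h1, by simpa using h2, by simpa using htake, by simpa using hlt⟩

namespace IsConvexOrder

variable {D} {le : (I → ℤ) → (I → ℤ) → Prop}

lemma flip (h : IsConvexOrder D le) : IsConvexOrder D (flip le) where
  refl v hv := h.refl v hv
  trans u v w hu hv hw huv hvw := h.trans w v u hw hv hu hvw huv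
  antisymm u v hu hv huv hvu := h.antisymm u v hu hv hvu huv
  total u v hu hv := h.total v u hv hu
  convex γ β hγ hβ hγβ hle := by
    have := h.convex β γ hβ hγ (add_comm γ β ▸ hγβ) hle
    rw [add_comm β γ] at this
    exact this.symm

/-- Peel off a summand `γ` with `(Σ G, γ) > 0`: the rest sums to the positive root `Σ G - γ`,
and convexity compares `γ + (Σ G - γ)` with both. -/
lemma exists_mem_sum_le (h : IsConvexOrder D le) {G : Multiset (I → ℤ)}
    (hG : ∀ γ ∈ G, IsPosRoot D γ) (hsum : IsPosRoot D G.sum) : ∃ γ ∈ G, le G.sum γ := by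
  induction G using Multiset.strongInductionOn with
  | ih G ih =>
    obtain ⟨γ, hγG, hpos⟩ := exists_mem_form_sum_pos D hsum.1
    have hγ := hG γ hγG
    have hδG : ∀ v ∈ G.erase γ, IsPosRoot D v :=
      fun v hv => hG v (Multiset.mem_of_mem_erase hv)
    by_cases hδ0 : G.erase γ = 0
    · refine ⟨γ, hγG, ?_⟩
      rw [← Multiset.sum_erase hγG, hδ0, Multiset.sum_zero, add_zero]
      exact h.refl γ hγ
    set δ := (G.erase γ).sum
    have hsplit : G.sum = γ + δ := (Multiset.sum_erase hγG).symm
    have hδ : IsPosRoot D δ := by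
      refine ⟨?_, Multiset.sum_nonneg fun v hv => (hδG v hv).nonneg⟩
      have hne : G.sum ≠ γ := by
        rw [hsplit, Ne, add_eq_left]
        exact sum_ne_zero_of_isPosRoot D hδG hδ0
      simpa [hsplit] using hsum.1.sub hγ.1 hne hpos
    rw [hsplit] at hsum ⊢
    rcases h.total γ δ hγ hδ with hle | hle
    · obtain ⟨γ', hγ', hδγ'⟩ := ih _ (Multiset.erase_lt.2 hγG) hδG hδ
      exact ⟨γ', Multiset.mem_of_mem_erase hγ',
        h.trans _ δ _ hsum hδ (hδG γ' hγ') (h.convex γ δ hγ hδ hsum hle).2 hδγ'⟩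
    · rw [add_comm] at hsum ⊢
      exact ⟨γ, hγG, (h.convex δ γ hδ hγ hsum hle).2⟩

/-- The first merged part is below the largest part of `lam`, and equal to it only if it is that
part alone. -/
lemma map_sum_eq_or_lexLt (h : IsConvexOrder D le) {lam : List (I → ℤ)}
    (hlam : ∀ v ∈ lam, IsPosRoot D v) (hsorted : lam.Pairwise fun a b => le b a)
    {P : List (Multiset (I → ℤ))} (hP : ∀ G ∈ P, IsPosRoot D G.sum) (hPlam : P.sum = lam) :
    P.map Multiset.sum = lam ∨
      LexLt (fun a b => le a b ∧ a ≠ b) (P.map Multiset.sum) lam := by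
  induction P generalizing lam with
  | nil => exact Or.inl (by simpa using hPlam.symm)
  | cons G P ih =>
    have hGpos := hP G (by simp)
    have hGlam : ∀ γ ∈ G, γ ∈ lam := fun γ hγ => by
      rw [← Multiset.mem_coe, ← hPlam, List.sum_cons]
      exact Multiset.mem_add.2 (Or.inl hγ)
    obtain ⟨γ, hγG, hGγ⟩ := h.exists_mem_sum_le (fun γ hγ => hlam γ (hGlam γ hγ)) hGpos
    obtain ⟨l₀, lam, rfl⟩ := List.exists_cons_of_ne_nil (List.ne_nil_of_mem (hGlam γ hγG))
    have hl₀ := hlam l₀ (by simp)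
    have hγ := hlam γ (hGlam γ hγG)
    have hγl₀ : le γ l₀ := by
      rcases List.mem_cons.1 (hGlam γ hγG) with rfl | hmem
      · exact h.refl γ hγ
      · exact (List.pairwise_cons.1 hsorted).1 γ hmem
    have hGl₀ : le G.sum l₀ := h.trans _ γ _ hGpos hγ hl₀ hGγ hγl₀
    by_cases heq : G.sum = l₀
    · have hγsum : γ = G.sum := h.antisymm _ _ hγ hGpos (heq ▸ hγl₀) hGγ
      have hG : G = {l₀} := by
        rw [← heq, ← hγsum]
        exact eq_singleton_of_sum_eq D (fun v hv => hlam v (hGlam v hv)) hγG hγsum.symm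
      have hPlam' : P.sum = lam := by
        rw [List.sum_cons, hG, Multiset.singleton_add, ← Multiset.cons_coe] at hPlam
        exact Multiset.cons_inj_right _ |>.1 hPlam
      rcases ih (fun v hv => hlam v (by simp [hv])) (List.pairwise_cons.1 hsorted).2
          (fun G hG => hP G (by simp [hG])) hPlam' with h' | h'
      · left
        simp [heq, h']
      · right
        simpa [heq] using lexLt_cons l₀ h'
    · right
      exact ⟨0, by simp, by simp, by simp, by simpa using ⟨hGl₀, heq⟩⟩

/-- The reversed comparison is the lexicographic one for the reversed lists and the flipped,
again convex, order. -/
lemma map_sum_eq_or_bilexLt (h : IsConvexOrder D le) {lam : List (I → ℤ)}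
    (hlam : ∀ v ∈ lam, IsPosRoot D v) (hsorted : lam.Pairwise fun a b => le b a)
    {P : List (Multiset (I → ℤ))} (hP : ∀ G ∈ P, IsPosRoot D G.sum) (hPlam : P.sum = lam) :
    P.map Multiset.sum = lam ∨ BilexLt le (P.map Multiset.sum) lam := by
  rcases h.map_sum_eq_or_lexLt hlam hsorted hP hPlam with heq | hlex
  · exact Or.inl heq
  rcases h.flip.map_sum_eq_or_lexLt (lam := lam.reverse) (by simpa using hlam)
      (List.pairwise_reverse.2 hsorted) (P := P.reverse) (by simpa using hP)
      (by rw [List.sum_reverse, hPlam, Multiset.coe_reverse]) with heq | hlex'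
  · left
    simpa [List.map_reverse] using heq
  · exact Or.inr ⟨hlex, by rw [← List.map_reverse]; exact hlex'⟩

end IsConvexOrder

end

def fiberGroups {M : Type} (lam : List M) {m : ℕ} (σ : Fin lam.length → Fin m) :
    List (Multiset M) :=
  List.ofFn fun s => ∑ t with σ t = s, {lam[t]}

lemma sum_fiberGroups {M : Type} (lam : List M) {m : ℕ} (σ : Fin lam.length → Fin m) :
    (fiberGroups lam σ).sum = lam := by
  rw [fiberGroups, List.sum_ofFn, Finset.sum_fiberwise, Finset.sum_eq_multiset_sum]
  simpa [Multiset.map_map, Function.comp_def, Fin.univ_val_map] using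
    Multiset.sum_map_singleton (Finset.univ.val.map fun t : Fin lam.length => lam[t])

lemma map_sum_fiberGroups {M : Type} [AddCommMonoid M] (lam : List M) {m : ℕ}
    (σ : Fin lam.length → Fin m) :
    (fiberGroups lam σ).map Multiset.sum = List.ofFn fun s => ∑ t with σ t = s, lam[t] := by
  simp [fiberGroups, List.map_ofFn, Function.comp_def, Multiset.sum_sum]

lemma factorsThrough_of_monotone {n : ℕ} {β γ : Type} [PartialOrder β] {f : Fin n → β}
    (hf : Monotone f) {g : Fin n → γ}
    (hg : ∀ (r : Fin n) (h : r.val + 1 < n),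
      f r = f ⟨r.val + 1, h⟩ → g r = g ⟨r.val + 1, h⟩) :
    g.FactorsThrough f := by
  suffices key : ∀ (d : ℕ) (a b : Fin n), a.val + d = b.val → f a = f b → g a = g b by
    intro a b hab
    rcases le_total a b with hle | hle
    · exact key _ a b (Nat.add_sub_cancel' hle) hab
    · exact (key _ b a (Nat.add_sub_cancel' hle) hab.symm).symm
  intro d
  induction d with
  | zero => exact fun a b hd _ => by rw [Fin.ext hd]
  | succ d ih =>
    intro a b hd hab
    have h : a.val + 1 < n := by omega
    have hstep : f a = f ⟨a.val + 1, h⟩ :=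
      le_antisymm (hf (Fin.le_def.2 (by simp))) (hab ▸ hf (Fin.le_def.2 (by simp; omega)))
    rw [hg a h hstep]
    exact ih _ b (by simp; omega) (hstep ▸ hab)

section

variable {I : Type} [Fintype I]

lemma natCast_sum_map_htroot {L : List (I → ℤ)} (hL : ∀ v ∈ L, 0 ≤ v) :
    ((L.map htroot).sum : ℤ) = ∑ i, L.sum i := by
  induction L with
  | nil => simp
  | cons a L ih =>
    simp only [List.map_cons, List.sum_cons, Nat.cast_add, Pi.add_apply, Finset.sum_add_distrib]
    rw [ih (fun v hv => hL v (by simp [hv])), htroot,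
      Int.toNat_of_nonneg (Finset.sum_nonneg fun i _ => hL a (by simp) i)]

lemma offset_succ (L : List (I → ℤ)) {t : ℕ} (h : t < L.length) :
    offset L (t + 1) = offset L t + htroot L[t] := by
  rw [offset, offset, List.take_add_one, List.map_append, List.sum_append,
    List.getElem?_eq_getElem h]
  simp

lemma offset_of_length_le (L : List (I → ℤ)) {t : ℕ} (h : L.length ≤ t) :
    offset L t = offset L L.length := by
  simp [offset, List.take_of_length_le h]

lemma offset_mono (L : List (I → ℤ)) : Monotone (offset L) := by
  refine monotone_nat_of_le_succ fun t => ?_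
  by_cases h : t < L.length
  · rw [offset_succ L h]
    omega
  · rw [offset_of_length_le L (by omega), offset_of_length_le L (t := t + 1) (by omega)]

lemma lt_length_of_offset {L : List (I → ℤ)} {t p : ℕ} (h₁ : offset L t ≤ p)
    (h₂ : p < offset L (t + 1)) : t < L.length := by
  by_contra h
  rw [offset_of_length_le L (not_lt.1 h)] at h₁
  rw [offset_of_length_le L (by omega)] at h₂
  omega

/-- The index of the block of `L` containing position `p`. -/
def blockIdx (L : List (I → ℤ)) (p : ℕ) : ℕ :=
  Nat.findGreatest (fun t => offset L t ≤ p) L.length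

lemma blockIdx_mono (L : List (I → ℤ)) : Monotone (blockIdx L) := fun _ _ hpq =>
  Nat.findGreatest_mono_left (fun _ ht => ht.trans hpq) L.length

lemma blockIdx_eq {L : List (I → ℤ)} {t p : ℕ} (h₁ : offset L t ≤ p)
    (h₂ : p < offset L (t + 1)) : blockIdx L p = t :=
  Nat.findGreatest_eq_iff.2 ⟨(lt_length_of_offset h₁ h₂).le, fun _ => h₁,
    fun k hk _ => by have := offset_mono L (show t + 1 ≤ k from hk); omega⟩

lemma offset_blockIdx_le (L : List (I → ℤ)) (p : ℕ) : offset L (blockIdx L p) ≤ p :=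
  Nat.findGreatest_spec (P := fun t => offset L t ≤ p) (Nat.zero_le _) (by simp [offset])

lemma lt_offset_blockIdx_succ {L : List (I → ℤ)} {p : ℕ} (hp : p < offset L L.length) :
    p < offset L (blockIdx L p + 1) := by
  by_cases h : blockIdx L p < L.length
  · exact not_le.1 (Nat.findGreatest_is_greatest (P := fun t => offset L t ≤ p)
      (Nat.lt_succ_self _) h)
  · rwa [offset_of_length_le L (by omega)]

def blockOf (L : List (I → ℤ)) {n : ℕ} (hL : offset L L.length = n) (r : Fin n) :
    Fin L.length :=
  ⟨blockIdx L r, lt_length_of_offset (offset_blockIdx_le L r)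
    (lt_offset_blockIdx_succ (hL ▸ r.2))⟩

variable {L : List (I → ℤ)} {n : ℕ} (hL : offset L L.length = n)

lemma blockOf_mono : Monotone (blockOf L hL) := fun _ _ hpq =>
  Fin.le_def.2 (blockIdx_mono L (Fin.le_def.1 hpq))

lemma sameBlock_iff_blockOf_eq (r s : Fin n) :
    sameBlock L r s ↔ blockOf L hL r = blockOf L hL s := by
  rw [Fin.ext_iff]
  constructor
  · rintro ⟨t, h₁, h₂, h₃, h₄⟩
    exact (blockIdx_eq h₁ h₂).trans (blockIdx_eq h₃ h₄).symm
  · intro (h : blockIdx L r = blockIdx L s)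
    exact ⟨blockIdx L r, offset_blockIdx_le L r, lt_offset_blockIdx_succ (hL ▸ r.2),
      h ▸ offset_blockIdx_le L s, h ▸ lt_offset_blockIdx_succ (hL ▸ s.2)⟩

end

section

variable {I : Type} [Fintype I] [DecidableEq I]

lemma offset_length_eq_ht {D : CartanDatum I} {α : I → ℕ} {L : List (I → ℤ)}
    (hpos : ∀ v ∈ L, IsPosRoot D v) (hsum : L.sum = fun i => (α i : ℤ)) :
    offset L L.length = ht α := by
  have := natCast_sum_map_htroot fun v hv => (hpos v hv).nonneg
  rw [hsum] at this
  rw [offset, List.take_of_length_le le_rfl]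
  apply Nat.cast_injective (R := ℤ)
  rw [this, ht, Nat.cast_sum]

variable {L : List (I → ℤ)} {n : ℕ} (hL : offset L L.length = n)

lemma card_blockOf_eq_of_blockMem {f : Fin n → I} (hf : blockMem L f) (t : Fin L.length)
    (i : I) :
    ((Finset.univ.filter fun r => blockOf L hL r = t ∧ f r = i).card : ℤ) = L[t] i := by
  rw [Fin.getElem_fin, ← List.get_eq_getElem, ← hf t t.2 i]
  congr 3
  ext r
  simp only [Fin.ext_iff, blockOf]
  constructor
  · rintro ⟨ht, hi⟩
    rw [← ht]
    exact ⟨offset_blockIdx_le L r, lt_offset_blockIdx_succ (hL ▸ r.2), hi⟩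
  · rintro ⟨h₁, h₂, hi⟩
    exact ⟨blockIdx_eq h₁ h₂, hi⟩

lemma htroot_pos {D : CartanDatum I} {v : I → ℤ} (hv : IsPosRoot D v) : 0 < htroot v := by
  obtain ⟨j, hj⟩ := Function.ne_iff.1 hv.1.ne_zero
  have : 0 < ∑ i, v i :=
    Finset.sum_pos' (fun i _ => hv.2 i)
      ⟨j, Finset.mem_univ j, lt_of_le_of_ne (hv.2 j) (Ne.symm hj)⟩
  simpa [htroot] using this

lemma blockOf_surjective {D : CartanDatum I} (hpos : ∀ v ∈ L, IsPosRoot D v) :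
    Function.Surjective (blockOf L hL) := by
  intro t
  have hlt : offset L t < offset L (t + 1) := by
    rw [offset_succ L t.2]
    exact Nat.lt_add_of_pos_right (htroot_pos (hpos _ (List.getElem_mem t.2)))
  have hn : offset L (t + 1) ≤ n := hL ▸ offset_mono L t.2
  exact ⟨⟨offset L t, by omega⟩, Fin.ext (blockIdx_eq le_rfl hlt)⟩

end

section

variable {I : Type} [Fintype I] [DecidableEq I]

variable {lam mu : List (I → ℤ)} {n : ℕ} (hlam : offset lam lam.length = n)
  (hmu : offset mu mu.length = n)

lemma exists_blockOf_inv_eq {D : CartanDatum I} (hpos : ∀ v ∈ lam, IsPosRoot D v)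
    (w : Equiv.Perm (Fin n))
    (hcon : ∀ (r : Fin n) (h : r.val + 1 < n),
      sameBlock lam r (r + 1) → sameBlock mu (w⁻¹ r) (w⁻¹ (nxt r h))) :
    ∃ σ : Fin lam.length → Fin mu.length,
      ∀ r, blockOf mu hmu (w⁻¹ r) = σ (blockOf lam hlam r) := by
  have hfac : (fun r => blockOf mu hmu (w⁻¹ r)).FactorsThrough (blockOf lam hlam) :=
    factorsThrough_of_monotone (blockOf_mono hlam) fun r h hr => by
      rw [← sameBlock_iff_blockOf_eq] at hr ⊢
      exact hcon r h hr
  have hsurj := blockOf_surjective hlam hpos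
  exact ⟨fun t => blockOf mu hmu (w⁻¹ (Function.surjInv hsurj t)),
    fun r => (hfac (Function.surjInv_eq hsurj _)).symm⟩

/-- Counting the letters of `g` in the `s`-th block of `mu`: they are the letters of `g ∘ w⁻¹`
in the blocks of `lam` that `w⁻¹` moves into it. -/
lemma getElem_eq_sum_of_blockOf (w : Equiv.Perm (Fin n)) {g : Fin n → I}
    (hg : blockMem mu g) (hf : blockMem lam (g ∘ ⇑w⁻¹))
    (σ : Fin lam.length → Fin mu.length)
    (hσ : ∀ r, blockOf mu hmu (w⁻¹ r) = σ (blockOf lam hlam r)) (s : Fin mu.length) :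
    mu[s] = ∑ t with σ t = s, lam[t] := by
  funext i
  rw [Finset.sum_apply, ← card_blockOf_eq_of_blockMem hmu hg,
    Finset.card_equiv w (t := Finset.univ.filter fun r =>
      σ (blockOf lam hlam r) = s ∧ (g ∘ ⇑w⁻¹) r = i) (fun q => by simp [← hσ]),
    Finset.card_eq_sum_card_fiberwise (f := blockOf lam hlam)
      (t := Finset.univ.filter (σ · = s)) (fun r hr => by simp_all)]
  push_cast
  refine Finset.sum_congr rfl fun t ht => ?_
  rw [← card_blockOf_eq_of_blockMem hlam hf t i, Finset.filter_filter]
  congr 2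
  ext r
  simp only [Finset.mem_filter, Finset.mem_univ, true_and] at ht ⊢
  constructor
  · exact fun h => ⟨h.2, h.1.2⟩
  · rintro ⟨rfl, hi⟩
    exact ⟨⟨ht, hi⟩, rfl⟩

end

section

variable {I : Type} [Fintype I] [DecidableEq I]
variable (k : Type) [CommRing k] (D : CartanDatum I) (α : I → ℕ)

lemma E_mul_E (f g : Fin (ht α) → I) :
    E k D α f * E k D α g = if f = g then E k D α f else 0 := by
  rw [E, E, ← map_mul, RingQuot.mkAlgHom_rel k (Rel.ee f g),
    apply_ite (RingQuot.mkAlgHom k (Rel k D α (ht α))), map_zero]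

lemma T_mul_E (r : Fin (ht α)) (h : r.val + 1 < ht α) (g : Fin (ht α) → I) :
    T k D α r * E k D α g = E k D α (g ∘ Equiv.swap r (nxt r h)) * T k D α r := by
  rw [T, E, E, ← map_mul, ← map_mul]
  exact RingQuot.mkAlgHom_rel k (Rel.te r h g)

lemma tauWord_mul_E {L : List (Fin (ht α))} (hL : ValidWord L) (g : Fin (ht α) → I) :
    tauWord k D α L * E k D α g = E k D α (g ∘ ⇑(wordPerm L)⁻¹) * tauWord k D α L := by
  induction L with
  | nil => simp [tauWord, wordPerm]
  | cons r L ih =>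
    have hr : r.val + 1 < ht α := hL r (by simp)
    have hperm : wordPerm (r :: L) = Equiv.swap r (nxt r hr) * wordPerm L := by
      simp [wordPerm, hr]
    have hcomp :
        (g ∘ ⇑(wordPerm L)⁻¹) ∘ Equiv.swap r (nxt r hr) = g ∘ ⇑(wordPerm (r :: L))⁻¹ := by
      rw [hperm, mul_inv_rev, Equiv.swap_inv]
      rfl
    rw [tauWord, List.map_cons, List.prod_cons, mul_assoc, ← tauWord,
      ih fun s hs => hL s (by simp [hs]), ← mul_assoc, T_mul_E k D α r hr, mul_assoc,
      hcomp]

lemma exists_blockMem_of_oneKP_mul_ne_zero {lam mu : List (I → ℤ)} {L : List (Fin (ht α))}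
    (hL : ValidWord L) (hne : oneKP k D α lam * tauWord k D α L * oneKP k D α mu ≠ 0) :
    ∃ g, blockMem mu g ∧ blockMem lam (g ∘ ⇑(wordPerm L)⁻¹) := by
  contrapose! hne
  rw [oneKP, oneKP, Finset.sum_mul, Finset.sum_mul]
  refine Finset.sum_eq_zero fun f _ => ?_
  rw [Finset.mul_sum]
  refine Finset.sum_eq_zero fun g _ => ?_
  by_cases hf : blockMem lam f
  swap
  · simp [hf]
  by_cases hg : blockMem mu g
  swap
  · simp [hg]
  rw [if_pos hf, if_pos hg, mul_assoc, tauWord_mul_E k D α hL, ← mul_assoc, E_mul_E,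
    if_neg fun h : f = g ∘ ⇑(wordPerm L)⁻¹ => hne g hg (h ▸ hf), zero_mul]

end

end KLR

open KLR

theorem stmt_7 {I : Type} [Fintype I] [DecidableEq I] (D : CartanDatum I)
    (k : Type) [Field k]
    (le : (I → ℤ) → (I → ℤ) → Prop) (hconv : IsConvexOrder D le)
    (α : I → ℕ) (lam mu : List (I → ℤ))
    (hlam : IsKP D le α lam) (hmu : IsKP D le α mu)
    (hnotge : ¬ (mu = lam ∨ BilexLt le mu lam))
    (w : Equiv.Perm (Fin (ht α))) (L : List (Fin (ht α)))
    (hL : IsReducedWordFor L w)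
    (hne : oneKP k D α lam * tauWord k D α L * oneKP k D α mu ≠ 0) :
    ∃ (r : Fin (ht α)) (h : r.val + 1 < ht α),
      sameBlock lam r.val (r.val + 1) ∧
        ¬ sameBlock mu ((w⁻¹ r).val) ((w⁻¹ (nxt r h)).val) := by
  by_contra! hcon
  obtain ⟨hLv, rfl, -⟩ := hL
  obtain ⟨g, hg, hf⟩ := exists_blockMem_of_oneKP_mul_ne_zero k D α hLv hne
  have hlamn := offset_length_eq_ht hlam.1 hlam.2.2
  have hmun := offset_length_eq_ht hmu.1 hmu.2.2
  obtain ⟨σ, hσ⟩ := exists_blockOf_inv_eq hlamn hmun hlam.1 _ hcon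
  have hgroups : (fiberGroups lam σ).map Multiset.sum = mu := by
    rw [map_sum_fiberGroups]
    refine (congrArg List.ofFn (funext fun s => ?_)).trans List.ofFn_getElem
    exact (getElem_eq_sum_of_blockOf hlamn hmun _ hg hf σ hσ s).symm
  apply hnotge
  rw [← hgroups]
  exact hconv.map_sum_eq_or_bilexLt hlam.1 hlam.2.1
    (fun G hG => hmu.1 _ (hgroups ▸ List.mem_map_of_mem hG)) (sum_fiberGroups lam σ)
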